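/- Let λ = (λ_m)_{m≥1} be a non-increasing sequence of nonnegative reals with λ₂ > 0. For each d ≥ 2 fix a nonempty subset I_d = {i₁ < i₂ < … < i_{#I_d}} ⊆ {1,…,d}, and let ∇_d be either the set of k ∈ (ℕ_{≥1})^d with k_{i₁} ≤ k_{i₂} ≤ … ≤ k_{i_{#I_d}} (symmetric case) or the set of k ∈ (ℕ_{≥1})^d with k_{i₁} < k_{i₂} < … < k_{i_{#I_d}} (antisymmetric case); set ∇₁ = ℕ_{≥1}. Assume λ_{d,1} := sup_{k∈∇_d} Π_{l=1}^d λ_{k_l} > 0 for all d and define n(ε,d) = #{ k ∈ ∇_d : Π_{l=1}^d λ_{k_l} > ε² }. If there exist constants C, p > 0 and q ≥ 0 such that n(ε,d) ≤ C·ε^{−p}·d^q for all d ≥ 1 and ε ∈ (0,1], then Σ_{m=1}^∞ λ_m^τ < ∞ for every τ > p/2, and for every such τ and every d ≥ 1, λ_{d,1}^{−τ} · Σ_{k∈∇_d} ( Π_{l=1}^d λ_{k_l} )^τ ≤ (1+C)·d^q + C^{2τ/p} · ζ(2τ/p) · ( d^{2q/p} / λ_{d,1} )^τ. -/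

import Mathlib

/-!
Write `w_k = ∏_l λ_{k_l}` for `k ∈ ∇_d`, `Λ = λ_{d,1}` and `A = C d^q`. Then `w ≤ Λ`, and with
`ε = √u` tractability says `#{k : w_k > u} ≤ A u^{-p/2}` for `u ≤ 1`. So for every `t > 0` there
are at most as many `w_k > t` as there are `j` with `b_j ≥ t`, where `b_j = Λ` for `j + 1 ≤ A` and
`b_j = (A / (j + 1))^{2/p}` otherwise. By the layer-cake formula, applied to both counting
measures, `∑ w_k^τ ≤ ∑ b_j^τ ≤ A Λ^τ + A^{2τ/p} ζ(2τ/p)`. For `d = 1`, `∇_1 ≅ ℕ_{≥1}`, and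
finiteness of the left-hand side is the summability of `λ^τ`.
-/

open scoped ENNReal

/-- `zeta' z = ∑_{n=1}^∞ n^{-z}`, the Riemann zeta function for real `z > 1`. -/
noncomputable def zeta' (z : ℝ) : ℝ := ∑' n : ℕ, ((n : ℝ) + 1) ^ (-z)

/-- The index set `∇_d` of the eigenvalues of the `I_d`-(anti)symmetric restriction of a
tensor product problem: multi-indices `k ∈ (ℕ_{≥1})^d` whose entries are non-decreasing
(resp. strictly increasing, if `strict`) along the coordinates in `I d`. -/
def nabla (I : (d : ℕ) → Set (Fin d)) (strict : Bool) (d : ℕ) : Set (Fin d → ℕ) :=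
  {k | (∀ l, 1 ≤ k l) ∧
    (if strict then ∀ a ∈ I d, ∀ b ∈ I d, a < b → k a < k b
     else ∀ a ∈ I d, ∀ b ∈ I d, a ≤ b → k a ≤ k b)}

/-- The largest eigenvalue `λ_{d,1} = sup_{k ∈ ∇_d} ∏_l λ_{k_l}` of the restricted
problem (the square of its initial error). -/
noncomputable def lamTop (lam : ℕ → ℝ) (I : (d : ℕ) → Set (Fin d)) (strict : Bool)
    (d : ℕ) : ℝ :=
  sSup {x : ℝ | ∃ k ∈ nabla I strict d, x = ∏ l, lam (k l)}

open MeasureTheory Set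

theorem summable_nat_add_one_rpow_neg {s : ℝ} (hs : 1 < s) :
    Summable fun n : ℕ => ((n : ℝ) + 1) ^ (-s) := by
  have := (summable_nat_add_iff 1).mpr (Real.summable_nat_rpow.mpr (neg_lt_neg hs))
  exact_mod_cast this

theorem zeta'_nonneg (s : ℝ) : 0 ≤ zeta' s :=
  tsum_nonneg fun _ => by positivity

theorem ofReal_zeta' {s : ℝ} (hs : 1 < s) :
    ENNReal.ofReal (zeta' s) = ∑' n : ℕ, ENNReal.ofReal (((n : ℝ) + 1) ^ (-s)) :=
  ENNReal.ofReal_tsum_of_nonneg (fun _ => by positivity) (summable_nat_add_one_rpow_neg hs)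

theorem encard_setOf_add_one_le {x : ℝ} (hx : 0 ≤ x) :
    {j : ℕ | (j : ℝ) + 1 ≤ x}.encard = ⌊x⌋₊ := by
  have : {j : ℕ | (j : ℝ) + 1 ≤ x} = Finset.range ⌊x⌋₊ := by
    ext j
    simp [Nat.lt_iff_add_one_le, Nat.le_floor_iff hx]
  rw [this, encard_coe_eq_coe_finsetCard, Finset.card_range]

theorem encard_le_encard_setOf_add_one_le {α : Type*} {s : Set α} {x : ℝ}
    (h : (s.encard : ℝ≥0∞) ≤ ENNReal.ofReal x) :
    s.encard ≤ {j : ℕ | (j : ℝ) + 1 ≤ x}.encard := by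
  rcases lt_or_ge x 0 with hx | hx
  · rw [ENNReal.ofReal_of_nonpos hx.le] at h
    simp_all
  have hfin : s.encard ≠ ⊤ :=
    ENat.toENNReal_ne_top.mp (ne_top_of_le_ne_top ENNReal.ofReal_ne_top h)
  obtain ⟨n, hn⟩ := ENat.ne_top_iff_exists.mp hfin
  rw [← hn] at h ⊢
  rw [encard_setOf_add_one_le hx]
  have : (n : ℝ) ≤ x := by simpa using ENNReal.toReal_le_of_le_ofReal hx h
  exact_mod_cast Nat.le_floor this

/- `<` on the left but `≤` on the right, so that `v` may attain the thresholds `t` exactly: no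
exceptional null set of `t` has to be removed when comparing with `countMajorant` below. -/
theorem tsum_ofReal_rpow_le_of_encard_lt_le_encard_le {α β : Type*} [Countable α] [Countable β]
    {w : α → ℝ} {v : β → ℝ} (hw : ∀ a, 0 ≤ w a) (hv : ∀ b, 0 ≤ v b) {τ : ℝ} (hτ : 0 < τ)
    (h : ∀ t, 0 < t → {a | t < w a}.encard ≤ {b | t ≤ v b}.encard) :
    ∑' a, ENNReal.ofReal (w a ^ τ) ≤ ∑' b, ENNReal.ofReal (v b ^ τ) := by
  let : MeasurableSpace α := ⊤
  let : MeasurableSpace β := ⊤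
  rw [← lintegral_count, ← lintegral_count,
    lintegral_rpow_eq_lintegral_meas_lt_mul _ (.of_forall hw) measurable_from_top.aemeasurable hτ,
    lintegral_rpow_eq_lintegral_meas_le_mul _ (.of_forall hv) measurable_from_top.aemeasurable hτ]
  refine mul_le_mul_right (setLIntegral_mono' measurableSet_Ioi fun t ht => ?_) _
  gcongr
  rw [Measure.count_apply MeasurableSpace.measurableSet_top,
    Measure.count_apply MeasurableSpace.measurableSet_top]
  exact_mod_cast h t ht

/- The `b_j` of the sketch above: the largest values a family can take under `w ≤ Λ` and
`#{w > u} ≤ A u^{-σ}` for `u ≤ 1`. -/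
noncomputable def countMajorant (A Λ σ : ℝ) (j : ℕ) : ℝ :=
  if (j : ℝ) + 1 ≤ A then Λ else (A / ((j : ℝ) + 1)) ^ σ⁻¹

section countMajorant

variable {A Λ σ : ℝ}

theorem countMajorant_nonneg (hA : 0 ≤ A) (hΛ : 0 ≤ Λ) (j : ℕ) : 0 ≤ countMajorant A Λ σ j := by
  unfold countMajorant
  split_ifs
  · exact hΛ
  · positivity

theorem le_countMajorant {t : ℝ} {j : ℕ} (hσ : 0 < σ) (ht : 0 < t) (htΛ : t < Λ)
    (hj : (j : ℝ) + 1 ≤ A * min t 1 ^ (-σ)) : t ≤ countMajorant A Λ σ j := by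
  unfold countMajorant
  split_ifs with hjA
  · exact htΛ.le
  have ht1 : t < 1 := by
    by_contra! h1
    rw [min_eq_right h1, Real.one_rpow, mul_one] at hj
    exact hjA hj
  rw [min_eq_left ht1.le, Real.rpow_neg ht.le, le_mul_inv_iff₀ (by positivity)] at hj
  have hA : 0 < A := lt_of_lt_of_le (by positivity) hj
  rw [Real.le_rpow_inv_iff_of_pos ht.le (by positivity) hσ, le_div_iff₀ (by positivity)]
  linarith

theorem encard_lt_le_encard_le_countMajorant {α : Type*} {w : α → ℝ} (hσ : 0 < σ)
    (hwΛ : ∀ a, w a ≤ Λ)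
    (hN : ∀ u, 0 < u → u ≤ 1 → ({a | u < w a}.encard : ℝ≥0∞) ≤ ENNReal.ofReal (A * u ^ (-σ)))
    {t : ℝ} (ht : 0 < t) : {a | t < w a}.encard ≤ {j | t ≤ countMajorant A Λ σ j}.encard := by
  rcases le_or_gt Λ t with htΛ | htΛ
  · have : {a | t < w a} = ∅ :=
      eq_empty_of_forall_notMem fun a ha => (hwΛ a).not_gt (htΛ.trans_lt ha)
    simp [this]
  calc {a | t < w a}.encard ≤ {a | min t 1 < w a}.encard :=
        encard_le_encard fun a ha => (min_le_left t 1).trans_lt ha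
    _ ≤ {j : ℕ | (j : ℝ) + 1 ≤ A * min t 1 ^ (-σ)}.encard :=
        encard_le_encard_setOf_add_one_le (hN _ (lt_min ht one_pos) (min_le_right t 1))
    _ ≤ _ := encard_le_encard fun j hj => le_countMajorant hσ ht htΛ hj

theorem countMajorant_rpow_of_lt {τ : ℝ} (hA : 0 ≤ A) {j : ℕ} (hj : A < (j : ℝ) + 1) :
    countMajorant A Λ σ j ^ τ = A ^ (τ / σ) * ((j : ℝ) + 1) ^ (-(τ / σ)) := by
  rw [countMajorant, if_neg hj.not_ge, ← Real.rpow_mul (by positivity),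
    Real.div_rpow hA (by positivity), Real.rpow_neg (by positivity), inv_mul_eq_div, div_eq_mul_inv]

theorem tsum_ofReal_countMajorant_rpow_le {τ : ℝ} (hA : 0 ≤ A) (hΛ : 0 ≤ Λ) (hσ : 0 < σ)
    (hστ : σ < τ) :
    ∑' j, ENNReal.ofReal (countMajorant A Λ σ j ^ τ) ≤
      ENNReal.ofReal (A * Λ ^ τ + A ^ (τ / σ) * zeta' (τ / σ)) := by
  have hs : 1 < τ / σ := (one_lt_div hσ).mpr hστ
  set S := {j : ℕ | (j : ℝ) + 1 ≤ A} with hS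
  have hterm : ∀ j, ENNReal.ofReal (countMajorant A Λ σ j ^ τ) ≤
      S.indicator (fun _ => ENNReal.ofReal (Λ ^ τ)) j +
        ENNReal.ofReal (A ^ (τ / σ)) * ENNReal.ofReal (((j : ℝ) + 1) ^ (-(τ / σ))) := by
    intro j
    by_cases hj : (j : ℝ) + 1 ≤ A
    · rw [indicator_of_mem (hS ▸ hj), countMajorant, if_pos hj]
      exact le_self_add
    · rw [indicator_of_notMem (hS ▸ hj), zero_add, countMajorant_rpow_of_lt hA (not_le.mp hj),
        ENNReal.ofReal_mul (by positivity)]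
  calc ∑' j, ENNReal.ofReal (countMajorant A Λ σ j ^ τ)
      ≤ ∑' j, (S.indicator (fun _ => ENNReal.ofReal (Λ ^ τ)) j +
          ENNReal.ofReal (A ^ (τ / σ)) * ENNReal.ofReal (((j : ℝ) + 1) ^ (-(τ / σ)))) :=
        ENNReal.tsum_le_tsum hterm
    _ = ⌊A⌋₊ * ENNReal.ofReal (Λ ^ τ) +
          ENNReal.ofReal (A ^ (τ / σ)) * ENNReal.ofReal (zeta' (τ / σ)) := by
        rw [ENNReal.tsum_add, ENNReal.tsum_mul_left, ← ofReal_zeta' hs, ← tsum_subtype,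
          ENNReal.tsum_set_const, encard_setOf_add_one_le hA, ENat.toENNReal_coe]
    _ ≤ _ := by
        rw [ENNReal.ofReal_add (by positivity) (mul_nonneg (by positivity) (zeta'_nonneg _)),
          ENNReal.ofReal_mul hA, ENNReal.ofReal_mul (by positivity)]
        gcongr
        rw [← ENNReal.ofReal_natCast]
        exact ENNReal.ofReal_le_ofReal (Nat.floor_le hA)

end countMajorant

theorem tsum_ofReal_rpow_le_of_encard_lt_le {α : Type*} [Countable α] {w : α → ℝ}
    {A Λ σ τ : ℝ} (hw : ∀ a, 0 ≤ w a) (hwΛ : ∀ a, w a ≤ Λ) (hA : 0 ≤ A) (hΛ : 0 ≤ Λ)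
    (hσ : 0 < σ) (hστ : σ < τ)
    (hN : ∀ u, 0 < u → u ≤ 1 → ({a | u < w a}.encard : ℝ≥0∞) ≤ ENNReal.ofReal (A * u ^ (-σ))) :
    ∑' a, ENNReal.ofReal (w a ^ τ) ≤ ENNReal.ofReal (A * Λ ^ τ + A ^ (τ / σ) * zeta' (τ / σ)) :=
  (tsum_ofReal_rpow_le_of_encard_lt_le_encard_le hw (countMajorant_nonneg hA hΛ) (hσ.trans hστ)
    fun _ ht => encard_lt_le_encard_le_countMajorant hσ hwΛ hN ht).trans
    (tsum_ofReal_countMajorant_rpow_le hA hΛ hσ hστ)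

section nabla

variable {I : (d : ℕ) → Set (Fin d)} {strict : Bool}

def nablaOneEquiv (I : (d : ℕ) → Set (Fin d)) (strict : Bool) :
    ℕ ≃ {k : Fin 1 → ℕ // k ∈ nabla I strict 1} where
  toFun m := ⟨fun _ => m + 1, fun _ => Nat.le_add_left 1 m, by cases strict <;> simp⟩
  invFun k := k.1 0 - 1
  left_inv m := Nat.add_sub_cancel m 1
  right_inv k := Subtype.ext <| funext fun l => by
    rw [Subsingleton.elim l 0]
    exact Nat.sub_add_cancel (k.2.1 0)

theorem tsum_nabla_one (g : (Fin 1 → ℕ) → ℝ≥0∞) :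
    ∑' k : {k : Fin 1 → ℕ // k ∈ nabla I strict 1}, g k = ∑' m : ℕ, g fun _ => m + 1 :=
  ((nablaOneEquiv I strict).tsum_eq fun k => g k).symm

variable {lam : ℕ → ℝ}

theorem prod_le_lamTop (hnn : ∀ m, 0 ≤ lam m) (hord : ∀ m m' : ℕ, 1 ≤ m → m ≤ m' → lam m' ≤ lam m)
    {d : ℕ} {k : Fin d → ℕ} (hk : k ∈ nabla I strict d) :
    ∏ l, lam (k l) ≤ lamTop lam I strict d := by
  refine le_csSup ⟨lam 1 ^ d, ?_⟩ ⟨k, hk, rfl⟩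
  rintro _ ⟨k', hk', rfl⟩
  calc ∏ l, lam (k' l) ≤ ∏ _l : Fin d, lam 1 :=
        Finset.prod_le_prod (fun l _ => hnn _) fun l _ => hord 1 (k' l) le_rfl (hk'.1 l)
    _ = lam 1 ^ d := by simp

variable {d : ℕ} {C p q : ℝ}

theorem encard_setOf_lt_prod_le
    (hPT : ∀ ε : ℝ, 0 < ε → ε ≤ 1 →
      (({k | k ∈ nabla I strict d ∧ ε ^ 2 < ∏ l, lam (k l)} : Set (Fin d → ℕ)).encard :
          ℝ≥0∞) ≤ ENNReal.ofReal (C * ε ^ (-p) * (d : ℝ) ^ q))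
    {u : ℝ} (hu : 0 < u) (hu1 : u ≤ 1) :
    ({k : {k : Fin d → ℕ // k ∈ nabla I strict d} | u < ∏ l, lam (k.1 l)}.encard : ℝ≥0∞) ≤
      ENNReal.ofReal (C * (d : ℝ) ^ q * u ^ (-(p / 2))) := by
  have hsq : √u ^ 2 = u := Real.sq_sqrt hu.le
  have hrpow : √u ^ (-p) = u ^ (-(p / 2)) := by
    rw [Real.sqrt_eq_rpow, ← Real.rpow_mul hu.le]
    ring_nf
  have himage : Subtype.val '' {k : {k : Fin d → ℕ // k ∈ nabla I strict d} | u < ∏ l, lam (k.1 l)}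
      = {k | k ∈ nabla I strict d ∧ √u ^ 2 < ∏ l, lam (k l)} := by
    ext k
    simp [hsq, and_comm]
  rw [← Subtype.val_injective.encard_image, himage, mul_right_comm, ← hrpow]
  exact hPT _ (Real.sqrt_pos.mpr hu) (Real.sqrt_le_one.mpr hu1)

theorem tsum_nabla_rpow_le (hnn : ∀ m, 0 ≤ lam m)
    (hord : ∀ m m' : ℕ, 1 ≤ m → m ≤ m' → lam m' ≤ lam m)
    (hpos : 0 < lamTop lam I strict d) (hC : 0 ≤ C) (hp : 0 < p)
    (hPT : ∀ ε : ℝ, 0 < ε → ε ≤ 1 →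
      (({k | k ∈ nabla I strict d ∧ ε ^ 2 < ∏ l, lam (k l)} : Set (Fin d → ℕ)).encard :
          ℝ≥0∞) ≤ ENNReal.ofReal (C * ε ^ (-p) * (d : ℝ) ^ q))
    {τ : ℝ} (hτ : p / 2 < τ) :
    (∑' k : {k : Fin d → ℕ // k ∈ nabla I strict d},
        ENNReal.ofReal ((∏ l, lam (k.1 l)) ^ τ)) ≤
      ENNReal.ofReal (lamTop lam I strict d ^ τ *
        ((1 + C) * (d : ℝ) ^ q +
          C ^ (2 * τ / p) * zeta' (2 * τ / p) *
            ((d : ℝ) ^ (2 * q / p) / lamTop lam I strict d) ^ τ)) := by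
  set Λ := lamTop lam I strict d
  refine (tsum_ofReal_rpow_le_of_encard_lt_le (fun k => Finset.prod_nonneg fun l _ => hnn _)
    (fun k => prod_le_lamTop hnn hord k.2) (by positivity) hpos.le (by positivity) hτ
    fun u hu hu1 => encard_setOf_lt_prod_le hPT hu hu1).trans
    (ENNReal.ofReal_le_ofReal ?_)
  have hdq : 0 ≤ (d : ℝ) ^ q := by positivity
  have hΛτ : Λ ^ τ * ((d : ℝ) ^ (2 * q / p) / Λ) ^ τ = ((d : ℝ) ^ q) ^ (2 * τ / p) := by
    rw [Real.div_rpow (by positivity) hpos.le, mul_div_cancel₀ _ (by positivity),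
      ← Real.rpow_mul (by positivity), ← Real.rpow_mul (by positivity)]
    ring_nf
  rw [show τ / (p / 2) = 2 * τ / p by field_simp, Real.mul_rpow hC hdq]
  calc C * (d : ℝ) ^ q * Λ ^ τ + C ^ (2 * τ / p) * ((d : ℝ) ^ q) ^ (2 * τ / p) * zeta' (2 * τ / p)
      ≤ (1 + C) * (d : ℝ) ^ q * Λ ^ τ +
          C ^ (2 * τ / p) * ((d : ℝ) ^ q) ^ (2 * τ / p) * zeta' (2 * τ / p) := by
        gcongr
        linarith
    _ = _ := by rw [← hΛτ]; ring

end nabla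

theorem stmt17_general (lam : ℕ → ℝ)
    (hnn : ∀ m, 0 ≤ lam m)
    (hord : ∀ m m' : ℕ, 1 ≤ m → m ≤ m' → lam m' ≤ lam m)
    (I : (d : ℕ) → Set (Fin d))
    (strict : Bool)
    (hpos : ∀ d : ℕ, 1 ≤ d → 0 < lamTop lam I strict d)
    (C p q : ℝ) (hC : 0 < C) (hp : 0 < p)
    (hPT : ∀ d : ℕ, 1 ≤ d → ∀ ε : ℝ, 0 < ε → ε ≤ 1 →
      (({k | k ∈ nabla I strict d ∧ ε ^ 2 < ∏ l, lam (k l)} : Set (Fin d → ℕ)).encard :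
          ℝ≥0∞) ≤
        ENNReal.ofReal (C * ε ^ (-p) * (d : ℝ) ^ q)) :
    ∀ τ : ℝ, p / 2 < τ →
      Summable (fun m : ℕ => lam (m + 1) ^ τ) ∧
      ∀ d : ℕ, 1 ≤ d →
        (∑' k : {k : Fin d → ℕ // k ∈ nabla I strict d},
            ENNReal.ofReal ((∏ l, lam (k.1 l)) ^ τ)) ≤
          ENNReal.ofReal (lamTop lam I strict d ^ τ *
            ((1 + C) * (d : ℝ) ^ q +
              C ^ (2 * τ / p) * zeta' (2 * τ / p) *
                ((d : ℝ) ^ (2 * q / p) / lamTop lam I strict d) ^ τ)) := by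
  intro τ hτ
  have hbound := fun d hd => tsum_nabla_rpow_le hnn hord (hpos d hd) hC.le hp (hPT d hd) hτ
  refine ⟨?_, hbound⟩
  have hfinite := ne_top_of_le_ne_top ENNReal.ofReal_ne_top (hbound 1 le_rfl)
  rw [tsum_nabla_one fun k => ENNReal.ofReal ((∏ l, lam (k l)) ^ τ)] at hfinite
  simp only [Finset.univ_unique, Finset.prod_singleton] at hfinite
  exact (ENNReal.summable_toReal hfinite).congr fun m =>
    ENNReal.toReal_ofReal (Real.rpow_nonneg (hnn _) τ)

/-- **Paper Lemma 5.7** (general necessary conditions for (anti)symmetric problems,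
absolute error criterion): if the `I`-(anti)symmetric problem with information
complexity `n(ε,d) = #{k ∈ ∇_d : ∏_l λ_{k_l} > ε²}` is polynomially tractable with
constants `C, p, q`, then `λ ∈ ℓ_τ` for every `τ > p/2`, and for each such `τ` and all
`d ≥ 1`:
`λ_{d,1}^{-τ} ∑_{k∈∇_d} (∏_l λ_{k_l})^τ ≤ (1+C) d^q + C^{2τ/p} ζ(2τ/p) (d^{2q/p}/λ_{d,1})^τ`. -/
theorem stmt17 (lam : ℕ → ℝ)
    (hnn : ∀ m, 0 ≤ lam m)
    (hord : ∀ m m' : ℕ, 1 ≤ m → m ≤ m' → lam m' ≤ lam m)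
    (hlam2 : 0 < lam 2)
    (I : (d : ℕ) → Set (Fin d)) (hI : ∀ d, 2 ≤ d → (I d).Nonempty)
    (strict : Bool)
    (hpos : ∀ d : ℕ, 1 ≤ d → 0 < lamTop lam I strict d)
    (C p q : ℝ) (hC : 0 < C) (hp : 0 < p) (hq : 0 ≤ q)
    (hPT : ∀ d : ℕ, 1 ≤ d → ∀ ε : ℝ, 0 < ε → ε ≤ 1 →
      (({k | k ∈ nabla I strict d ∧ ε ^ 2 < ∏ l, lam (k l)} : Set (Fin d → ℕ)).encard :
          ℝ≥0∞) ≤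
        ENNReal.ofReal (C * ε ^ (-p) * (d : ℝ) ^ q)) :
    ∀ τ : ℝ, p / 2 < τ →
      Summable (fun m : ℕ => lam (m + 1) ^ τ) ∧
      ∀ d : ℕ, 1 ≤ d →
        (∑' k : {k : Fin d → ℕ // k ∈ nabla I strict d},
            ENNReal.ofReal ((∏ l, lam (k.1 l)) ^ τ)) ≤
          ENNReal.ofReal (lamTop lam I strict d ^ τ *
            ((1 + C) * (d : ℝ) ^ q +
              C ^ (2 * τ / p) * zeta' (2 * τ / p) *
                ((d : ℝ) ^ (2 * q / p) / lamTop lam I strict d) ^ τ)) :=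
  stmt17_general lam hnn hord I strict hpos C p q hC hp hPT
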